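/- arXiv:2410.20020 — 4 statements merged into one kernel-verified Lean document; each statement's English description precedes it below -/
import Mathlib

section
/- (Talagrand-type isoperimetric inequality over F_q) For any monotone decreasing function f : F_q^n → {0,1} and any p ∈ [0,1], E_{z∼p}[√(h_f(z))] ≥ ((1−p)/2)·E_{z∼p}[f(z)]·(1 − E_{z∼p}[f(z)]). -/
open Finset

/-- Expectation of `f` under the q-ary `p`-noisy distribution on `F_q^n`. -/
noncomputable def noisyExp (q n : ℕ) [NeZero q] (p : ℝ) (f : (Fin n → ZMod q) → ℝ) : ℝ :=
  ∑ z : Fin n → ZMod q, (∏ i, if z i = 0 then 1 - p else p / (q - 1)) * f z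

/-- `f` is monotone decreasing. -/
def MonoDec (q n : ℕ) [NeZero q] (f : (Fin n → ZMod q) → ℝ) : Prop :=
  ∀ (z : Fin n → ZMod q) (i : Fin n) (a : ZMod q), a ≠ 0 →
    f (Function.update z i a) ≤ f (Function.update z i 0)

/-- `h_f(z)`: if `f z = 1`, the number of coordinates `i` with `z i = 0` such that
setting the `i`-th coordinate to some nonzero `a` makes `f` vanish; `0` otherwise. -/
noncomputable def hfun (q n : ℕ) [NeZero q] (f : (Fin n → ZMod q) → ℝ)
    (z : Fin n → ZMod q) : ℝ :=
  if f z = 1 then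
    (Nat.card {i : Fin n // z i = 0 ∧ ∃ a : ZMod q, a ≠ 0 ∧ f (Function.update z i a) = 0} : ℝ)
  else 0

/-! Induct on `n`, slicing along the first coordinate: `f_x := f (Fin.cons x ·)`,
`μ_x := E f_x`, and `B := E b` where `b` indicates that the first coordinate is counted by `h_f`
at `(0, z)`. Then `E f` is the `ν`-average of the `μ_x` (`ν` the one-coordinate law), and
monotonicity gives `0 ≤ μ_0 - μ_x ≤ B`, so `E f (1 - E f) ≤ Σ ν_x μ_x (1 - μ_x) + B²`. The slices
`x ≠ 0` are handled by induction; on the slice `0` one has `h_f (0, ·) = h_{f_0} + b`, and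
Minkowski's inequality `E √(X + b) ≥ √((E √X)² + B²)`, together with `α + B²/2 ≤ √(α² + B²)`
for the inductive bound `α ≤ 1/8` on that slice, absorbs the extra `B²`. -/

lemma sqrt_sq_add_sq_sum_le {ι : Type*} (s : Finset ι) {w a b : ι → ℝ}
    (hw : ∀ i ∈ s, 0 ≤ w i) :
    √((∑ i ∈ s, w i * a i) ^ 2 + (∑ i ∈ s, w i * b i) ^ 2) ≤
      ∑ i ∈ s, w i * √(a i ^ 2 + b i ^ 2) := by
  calc √((∑ i ∈ s, w i * a i) ^ 2 + (∑ i ∈ s, w i * b i) ^ 2)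
      = ‖∑ i ∈ s, w i • ((a i : ℂ) + b i * Complex.I)‖ := by
        rw [← Complex.norm_add_mul_I]
        push_cast
        simp only [Complex.real_smul, mul_add, sum_add_distrib, sum_mul, mul_assoc]
    _ ≤ ∑ i ∈ s, ‖w i • ((a i : ℂ) + b i * Complex.I)‖ := norm_sum_le _ _
    _ = ∑ i ∈ s, w i * √(a i ^ 2 + b i ^ 2) := sum_congr rfl fun i hi => by
        rw [norm_smul, Complex.norm_add_mul_I, Real.norm_of_nonneg (hw i hi)]

lemma sum_mul_one_sub_sum_le {ι : Type*} (s : Finset ι) (ν m : ι → ℝ)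
    (hν : ∑ i ∈ s, ν i = 1) (c : ℝ) :
    (∑ i ∈ s, ν i * m i) * (1 - ∑ i ∈ s, ν i * m i) ≤
      ∑ i ∈ s, ν i * (m i * (1 - m i)) + ∑ i ∈ s, ν i * (m i - c) ^ 2 := by
  have hexpand : ∑ i ∈ s, ν i * (m i * (1 - m i)) + ∑ i ∈ s, ν i * (m i - c) ^ 2 =
      (1 - 2 * c) * ∑ i ∈ s, ν i * m i + c ^ 2 * ∑ i ∈ s, ν i := by
    rw [← sum_add_distrib, mul_sum, mul_sum, ← sum_add_distrib]
    exact sum_congr rfl fun i _ => by ring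
  rw [hexpand, hν]
  nlinarith [sq_nonneg (∑ i ∈ s, ν i * m i - c)]

lemma add_sq_div_two_le_sqrt {α B : ℝ} (h : 4 * α + B ^ 2 ≤ 4) :
    α + B ^ 2 / 2 ≤ √(α ^ 2 + B ^ 2) :=
  (le_abs_self _).trans (Real.abs_le_sqrt (by nlinarith [sq_nonneg B]))

open Classical in
lemma natCard_subtype_fin_succ {n : ℕ} (P : Fin (n + 1) → Prop) :
    (Nat.card {i // P i} : ℝ) = (if P 0 then 1 else 0) + Nat.card {i : Fin n // P i.succ} := by
  simp only [Nat.card_eq_fintype_card, Fintype.card_subtype, natCast_card_filter,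
    Fin.sum_univ_succ]

section
variable {q : ℕ} [NeZero q] {n : ℕ} {p : ℝ}

noncomputable def coordWeight (p : ℝ) (x : ZMod q) : ℝ :=
  if x = 0 then 1 - p else p / ((q : ℝ) - 1)

lemma coordWeight_nonneg (hp : p ∈ Set.Icc (0 : ℝ) 1) (x : ZMod q) : 0 ≤ coordWeight p x := by
  have hq : (0 : ℝ) ≤ (q : ℝ) - 1 := by
    have := NeZero.one_le (n := q)
    exact sub_nonneg.2 (by exact_mod_cast this)
  unfold coordWeight
  split_ifs
  · linarith [hp.2]
  · exact div_nonneg hp.1 hq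

lemma sum_coordWeight (hq : 2 ≤ q) (p : ℝ) : ∑ x : ZMod q, coordWeight p x = 1 := by
  have hq' : (q : ℝ) - 1 ≠ 0 := by
    have : (2 : ℝ) ≤ q := by exact_mod_cast hq
    linarith
  have hne : ∀ x ∈ univ.erase (0 : ZMod q), coordWeight p x = p / ((q : ℝ) - 1) :=
    fun x hx => if_neg (ne_of_mem_erase hx)
  rw [← add_sum_erase _ _ (mem_univ 0), sum_congr rfl hne, coordWeight, if_pos rfl, sum_const,
    card_erase_of_mem (mem_univ _), card_univ, ZMod.card, nsmul_eq_mul,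
    Nat.cast_pred (by omega)]
  field_simp
  ring

lemma noisyExp_eq_sum (p : ℝ) (g : (Fin n → ZMod q) → ℝ) :
    noisyExp q n p g = ∑ z, (∏ i, coordWeight p (z i)) * g z := rfl

lemma noisyExp_one (hq : 2 ≤ q) (p : ℝ) : noisyExp q n p (fun _ => 1) = 1 := by
  simp only [noisyExp_eq_sum, mul_one, ← Fintype.prod_sum, sum_coordWeight hq, prod_const_one]

lemma noisyExp_succ (p : ℝ) (g : (Fin (n + 1) → ZMod q) → ℝ) :
    noisyExp q (n + 1) p g =
      ∑ x, coordWeight p x * noisyExp q n p (fun z => g (Fin.cons x z)) := by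
  rw [noisyExp_eq_sum, ← (Fin.consEquiv fun _ => ZMod q).sum_comp, Fintype.sum_prod_type]
  refine sum_congr rfl fun x _ => ?_
  rw [noisyExp_eq_sum, mul_sum]
  refine sum_congr rfl fun z _ => ?_
  simp [Fin.consEquiv, Fin.prod_univ_succ, mul_assoc]

lemma noisyExp_zero (p : ℝ) (g : (Fin 0 → ZMod q) → ℝ) :
    noisyExp q 0 p g = g Fin.elim0 := by
  rw [noisyExp_eq_sum, Fintype.sum_unique, prod_of_isEmpty, one_mul]
  exact congrArg g (Subsingleton.elim _ _)

lemma noisyExp_mono (hp : p ∈ Set.Icc (0 : ℝ) 1) {g₁ g₂ : (Fin n → ZMod q) → ℝ}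
    (h : ∀ z, g₁ z ≤ g₂ z) : noisyExp q n p g₁ ≤ noisyExp q n p g₂ :=
  sum_le_sum fun z _ => mul_le_mul_of_nonneg_left (h z)
    (prod_nonneg fun i _ => coordWeight_nonneg hp (z i))

lemma noisyExp_nonneg (hp : p ∈ Set.Icc (0 : ℝ) 1) {g : (Fin n → ZMod q) → ℝ}
    (h : ∀ z, 0 ≤ g z) : 0 ≤ noisyExp q n p g := by
  simpa [noisyExp] using noisyExp_mono hp h

lemma noisyExp_mem_Icc (hq : 2 ≤ q) (hp : p ∈ Set.Icc (0 : ℝ) 1) {g : (Fin n → ZMod q) → ℝ}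
    (h : ∀ z, g z ∈ Set.Icc (0 : ℝ) 1) : noisyExp q n p g ∈ Set.Icc (0 : ℝ) 1 :=
  ⟨noisyExp_nonneg hp fun z => (h z).1,
    (noisyExp_mono hp fun z => (h z).2).trans (noisyExp_one hq p).le⟩

lemma noisyExp_sub (p : ℝ) (g₁ g₂ : (Fin n → ZMod q) → ℝ) :
    noisyExp q n p (fun z => g₁ z - g₂ z) = noisyExp q n p g₁ - noisyExp q n p g₂ := by
  simp only [noisyExp, mul_sub, sum_sub_distrib]

lemma sqrt_sq_add_sq_noisyExp_le (hp : p ∈ Set.Icc (0 : ℝ) 1) {X Y : (Fin n → ZMod q) → ℝ}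
    (hX : ∀ z, 0 ≤ X z) (hY : ∀ z, 0 ≤ Y z) :
    √(noisyExp q n p (fun z => √(X z)) ^ 2 + noisyExp q n p (fun z => √(Y z)) ^ 2) ≤
      noisyExp q n p (fun z => √(X z + Y z)) := by
  have h := sqrt_sq_add_sq_sum_le univ (w := fun z => ∏ i, coordWeight p (z i))
    (a := fun z => √(X z)) (b := fun z => √(Y z))
    fun z _ => prod_nonneg fun i _ => coordWeight_nonneg hp (z i)
  simp only [Real.sq_sqrt (hX _), Real.sq_sqrt (hY _)] at h
  exact h

-- The summand of `h_f (Fin.cons 0 z)` contributed by the coordinate `0`.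
noncomputable def headBoundary (f : (Fin (n + 1) → ZMod q) → ℝ) (z : Fin n → ZMod q) : ℝ :=
  if f (Fin.cons 0 z) = 1 ∧ ∃ a : ZMod q, a ≠ 0 ∧ f (Fin.cons a z) = 0 then 1 else 0

lemma headBoundary_mem_Icc (f : (Fin (n + 1) → ZMod q) → ℝ) (z : Fin n → ZMod q) :
    headBoundary f z ∈ Set.Icc (0 : ℝ) 1 := by
  unfold headBoundary; split_ifs <;> norm_num

lemma sqrt_headBoundary (f : (Fin (n + 1) → ZMod q) → ℝ) (z : Fin n → ZMod q) :
    √(headBoundary f z) = headBoundary f z := by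
  unfold headBoundary; split_ifs <;> simp

lemma sub_le_headBoundary {f : (Fin (n + 1) → ZMod q) → ℝ} (hf01 : ∀ z, f z = 0 ∨ f z = 1)
    {a : ZMod q} (ha : a ≠ 0) (z : Fin n → ZMod q) :
    f (Fin.cons 0 z) - f (Fin.cons a z) ≤ headBoundary f z := by
  by_cases h : f (Fin.cons 0 z) = 1 ∧ f (Fin.cons a z) = 0
  · rw [headBoundary, if_pos ⟨h.1, a, ha, h.2⟩, h.1, h.2]
    norm_num
  · have hle : f (Fin.cons 0 z) - f (Fin.cons a z) ≤ 0 := by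
      rcases hf01 (Fin.cons 0 z) with h0 | h0 <;> rcases hf01 (Fin.cons a z) with h1 | h1 <;>
        simp_all
    exact hle.trans (headBoundary_mem_Icc f z).1

lemma hfun_cons_of_ne_zero (f : (Fin (n + 1) → ZMod q) → ℝ) {x : ZMod q} (hx : x ≠ 0)
    (z : Fin n → ZMod q) :
    hfun q (n + 1) f (Fin.cons x z) = hfun q n (fun y => f (Fin.cons x y)) z := by
  unfold hfun
  split_ifs
  · rw [natCard_subtype_fin_succ, if_neg (by simp [hx]), zero_add]
    simp only [Fin.cons_succ, ← Fin.cons_update]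
  · rfl

lemma hfun_cons_zero (f : (Fin (n + 1) → ZMod q) → ℝ) (z : Fin n → ZMod q) :
    hfun q (n + 1) f (Fin.cons 0 z) =
      hfun q n (fun y => f (Fin.cons 0 y)) z + headBoundary f z := by
  unfold hfun headBoundary
  by_cases h : f (Fin.cons 0 z) = 1
  · rw [if_pos h, if_pos h, natCard_subtype_fin_succ, add_comm]
    simp only [Fin.cons_succ, ← Fin.cons_update, Fin.cons_zero, Fin.update_cons_zero, h,
      true_and]
  · simp [h]

lemma hfun_nonneg (f : (Fin n → ZMod q) → ℝ) (z : Fin n → ZMod q) : 0 ≤ hfun q n f z := by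
  unfold hfun; split_ifs <;> positivity

lemma MonoDec.cons {f : (Fin (n + 1) → ZMod q) → ℝ} (hf : MonoDec q (n + 1) f) (x : ZMod q) :
    MonoDec q n (fun z => f (Fin.cons x z)) := fun z i a ha => by
  simpa only [← Fin.cons_update] using hf (Fin.cons x z) i.succ a ha

lemma MonoDec.cons_le_cons_zero {f : (Fin (n + 1) → ZMod q) → ℝ} (hf : MonoDec q (n + 1) f)
    {a : ZMod q} (ha : a ≠ 0) (z : Fin n → ZMod q) : f (Fin.cons a z) ≤ f (Fin.cons 0 z) := by
  simpa only [Fin.update_cons_zero] using hf (Fin.cons 0 z) 0 a ha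

lemma noisyExp_cons_zero_sub_mem_Icc (hp : p ∈ Set.Icc (0 : ℝ) 1)
    {f : (Fin (n + 1) → ZMod q) → ℝ} (hf01 : ∀ z, f z = 0 ∨ f z = 1)
    (hmono : MonoDec q (n + 1) f) (x : ZMod q) :
    noisyExp q n p (fun z => f (Fin.cons 0 z)) - noisyExp q n p (fun z => f (Fin.cons x z)) ∈
      Set.Icc 0 (noisyExp q n p (headBoundary f)) := by
  rcases eq_or_ne x 0 with rfl | hx
  · simpa using noisyExp_nonneg hp fun z => (headBoundary_mem_Icc f z).1
  rw [← noisyExp_sub]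
  exact ⟨noisyExp_nonneg hp fun z => sub_nonneg.2 (hmono.cons_le_cons_zero hx z),
    noisyExp_mono hp (sub_le_headBoundary hf01 hx)⟩

lemma noisyExp_mul_one_sub_le (hq : 2 ≤ q) (hp : p ∈ Set.Icc (0 : ℝ) 1)
    {f : (Fin (n + 1) → ZMod q) → ℝ} (hf01 : ∀ z, f z = 0 ∨ f z = 1)
    (hmono : MonoDec q (n + 1) f) :
    noisyExp q (n + 1) p f * (1 - noisyExp q (n + 1) p f) ≤
      ∑ x, coordWeight p x * (noisyExp q n p (fun z => f (Fin.cons x z)) *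
        (1 - noisyExp q n p (fun z => f (Fin.cons x z)))) +
      noisyExp q n p (headBoundary f) ^ 2 := by
  set μ := fun x => noisyExp q n p (fun z => f (Fin.cons x z))
  set B := noisyExp q n p (headBoundary f)
  have hgap : ∀ x, coordWeight p x * (μ x - μ 0) ^ 2 ≤ coordWeight p x * B ^ 2 := fun x => by
    have h := noisyExp_cons_zero_sub_mem_Icc hp hf01 hmono x
    have : (μ x - μ 0) ^ 2 ≤ B ^ 2 := by nlinarith [h.1, h.2]
    exact mul_le_mul_of_nonneg_left this (coordWeight_nonneg hp x)
  calc noisyExp q (n + 1) p f * (1 - noisyExp q (n + 1) p f)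
      ≤ ∑ x, coordWeight p x * (μ x * (1 - μ x)) + ∑ x, coordWeight p x * (μ x - μ 0) ^ 2 := by
        rw [noisyExp_succ]
        exact sum_mul_one_sub_sum_le univ _ μ (sum_coordWeight hq p) (μ 0)
    _ ≤ ∑ x, coordWeight p x * (μ x * (1 - μ x)) + B ^ 2 := by
        grw [sum_le_sum fun x _ => hgap x, ← sum_mul, sum_coordWeight hq, one_mul]

lemma add_sq_div_two_le_noisyExp_sqrt_hfun_cons_zero (hq : 2 ≤ q) (hp : p ∈ Set.Icc (0 : ℝ) 1)
    (f : (Fin (n + 1) → ZMod q) → ℝ) {α : ℝ} (hα : 0 ≤ α) (hα1 : α ≤ 3 / 4)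
    (hαh : α ≤ noisyExp q n p (fun z => √(hfun q n (fun y => f (Fin.cons 0 y)) z))) :
    α + noisyExp q n p (headBoundary f) ^ 2 / 2 ≤
      noisyExp q n p (fun z => √(hfun q (n + 1) f (Fin.cons 0 z))) := by
  set B := noisyExp q n p (headBoundary f)
  have hB := noisyExp_mem_Icc hq hp (headBoundary_mem_Icc f)
  have hsqrtB : noisyExp q n p (fun z => √(headBoundary f z)) = B := by
    simp only [sqrt_headBoundary]; rfl
  calc α + B ^ 2 / 2 ≤ √(α ^ 2 + B ^ 2) := add_sq_div_two_le_sqrt (by nlinarith [hB.1, hB.2])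
    _ ≤ √(noisyExp q n p (fun z => √(hfun q n (fun y => f (Fin.cons 0 y)) z)) ^ 2 +
          noisyExp q n p (fun z => √(headBoundary f z)) ^ 2) := by
        rw [hsqrtB]; gcongr
    _ ≤ noisyExp q n p
          (fun z => √(hfun q n (fun y => f (Fin.cons 0 y)) z + headBoundary f z)) :=
        sqrt_sq_add_sq_noisyExp_le hp (hfun_nonneg _) fun z => (headBoundary_mem_Icc f z).1
    _ = _ := by simp only [hfun_cons_zero]

lemma talagrand_succ (hq : 2 ≤ q) (hp : p ∈ Set.Icc (0 : ℝ) 1)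
    {f : (Fin (n + 1) → ZMod q) → ℝ} (hf01 : ∀ z, f z = 0 ∨ f z = 1)
    (hmono : MonoDec q (n + 1) f)
    (ih : ∀ x, (1 - p) / 2 * (noisyExp q n p (fun z => f (Fin.cons x z)) *
        (1 - noisyExp q n p (fun z => f (Fin.cons x z)))) ≤
      noisyExp q n p (fun z => √(hfun q n (fun y => f (Fin.cons x y)) z))) :
    (1 - p) / 2 * (noisyExp q (n + 1) p f * (1 - noisyExp q (n + 1) p f)) ≤
      noisyExp q (n + 1) p (fun z => √(hfun q (n + 1) f z)) := by
  set μ := fun x => noisyExp q n p (fun z => f (Fin.cons x z))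
  set B := noisyExp q n p (headBoundary f)
  have hslice : ∀ x, (1 - p) / 2 * (μ x * (1 - μ x)) + (if x = 0 then B ^ 2 / 2 else 0) ≤
      noisyExp q n p (fun z => √(hfun q (n + 1) f (Fin.cons x z))) := fun x => by
    have hμ : μ x ∈ Set.Icc (0 : ℝ) 1 :=
      noisyExp_mem_Icc hq hp fun z => by rcases hf01 (Fin.cons x z) with h | h <;> simp [h]
    have hvar : 0 ≤ μ x * (1 - μ x) := mul_nonneg hμ.1 (sub_nonneg.2 hμ.2)
    split_ifs with hx
    · subst hx
      exact add_sq_div_two_le_noisyExp_sqrt_hfun_cons_zero hq hp f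
        (mul_nonneg (by linarith [hp.2]) hvar) (by nlinarith [hμ.1, hμ.2, hp.1]) (ih 0)
    · simpa only [add_zero, hfun_cons_of_ne_zero f hx] using ih x
  calc (1 - p) / 2 * (noisyExp q (n + 1) p f * (1 - noisyExp q (n + 1) p f))
      ≤ (1 - p) / 2 * (∑ x, coordWeight p x * (μ x * (1 - μ x)) + B ^ 2) := by
        gcongr
        · linarith [hp.2]
        · exact noisyExp_mul_one_sub_le hq hp hf01 hmono
    _ = ∑ x, coordWeight p x *
          ((1 - p) / 2 * (μ x * (1 - μ x)) + (if x = 0 then B ^ 2 / 2 else 0)) := by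
        have h0 : coordWeight p (0 : ZMod q) = 1 - p := if_pos rfl
        simp only [mul_add, sum_add_distrib, mul_ite, mul_zero, sum_ite_eq', mem_univ, if_true,
          mul_sum, h0]
        congr 1
        · exact sum_congr rfl fun x _ => by ring
        · ring
    _ ≤ ∑ x, coordWeight p x * noisyExp q n p (fun z => √(hfun q (n + 1) f (Fin.cons x z))) :=
        sum_le_sum fun x _ => mul_le_mul_of_nonneg_left (hslice x) (coordWeight_nonneg hp x)
    _ = noisyExp q (n + 1) p (fun z => √(hfun q (n + 1) f z)) := by rw [noisyExp_succ]

end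

/-- Talagrand-type isoperimetric inequality over `F_q`. -/
theorem stmt2 (q n : ℕ) [NeZero q] (hq : 2 ≤ q)
    (f : (Fin n → ZMod q) → ℝ) (hf01 : ∀ z, f z = 0 ∨ f z = 1)
    (hmono : MonoDec q n f) (p : ℝ) (hp : p ∈ Set.Icc (0:ℝ) 1) :
    (1 - p) / 2 * (noisyExp q n p f * (1 - noisyExp q n p f)) ≤
      noisyExp q n p (fun z => Real.sqrt (hfun q n f z)) := by
  induction n with
  | zero =>
    rw [noisyExp_zero]
    rcases hf01 Fin.elim0 with h | h <;> rw [h] <;>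
      simpa using noisyExp_nonneg hp fun z => Real.sqrt_nonneg _
  | succ n ih =>
    exact talagrand_succ hq hp hf01 hmono fun x => ih _ (fun z => hf01 _) (hmono.cons x)
end

section
/- Let C ⊆ F_q^n be a linear code with minimum distance d_min, and let z ∈ F_q^n and c ∈ C satisfy d(z,0) ≤ d(z,c). Then |supp(c) \ supp(z)| ≥ d_min/q − d(z,c) + min_{c'∈C} d(z,c'), where d denotes Hamming distance and supp the support. -/
/-! Averaging over the `q` scalar multiples of `c`, which all lie in `C`, gives
`q · min_{c' ∈ C} d(z,c') ≤ ∑_λ d(z, λc) = q · |supp c ∪ supp z| - wt c`: a coordinate outside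
`supp c ∪ supp z` is never counted, one in `supp z \ supp c` always, and one in `supp c` for
every `λ` except `z_i / c_i`. Then `wt c ≥ d_min`, and `wt z ≤ d(z,c)` bounds
`|supp c ∪ supp z| = |supp c \ supp z| + wt z` by `|supp c \ supp z| + d(z,c)`. -/

open Finset

theorem card_support_union_le_of_hammingNorm_le {ι F : Type*} [Fintype ι] [Zero F]
    [DecidableEq F] {z c : ι → F} (hzc : hammingNorm z ≤ hammingDist z c) :
    #{i | c i ≠ 0 ∨ z i ≠ 0} ≤ #{i | c i ≠ 0 ∧ z i = 0} + hammingDist z c := by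
  classical
  have hsplit : univ.filter (fun i => c i ≠ 0 ∨ z i ≠ 0) =
      univ.filter (fun i => c i ≠ 0 ∧ z i = 0) ∪ univ.filter (fun i => z i ≠ 0) := by
    ext i
    simp only [mem_filter, mem_univ, true_and, mem_union]
    tauto
  calc #{i | c i ≠ 0 ∨ z i ≠ 0}
      ≤ #{i | c i ≠ 0 ∧ z i = 0} + hammingNorm z := by
        rw [hsplit]
        exact card_union_le _ _
    _ ≤ #{i | c i ≠ 0 ∧ z i = 0} + hammingDist z c := Nat.add_le_add_left hzc _

theorem card_mul_sInf_hammingDist_le_sum_smul {ι R : Type*} [Fintype ι] [Semiring R]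
    [Fintype R] [DecidableEq R] (C : Submodule R (ι → R)) (z : ι → R)
    {c : ι → R} (hc : c ∈ C) :
    Fintype.card R * sInf {m : ℕ | ∃ c' ∈ C, hammingDist z c' = m} ≤
      ∑ l : R, hammingDist z (l • c) := by
  rw [← smul_eq_mul, ← card_univ, ← sum_const]
  exact sum_le_sum fun l _ => Nat.sInf_le ⟨l • c, C.smul_mem l hc, rfl⟩

section HammingAveraging

variable {F : Type*} [Field F] [Fintype F] [DecidableEq F]

theorem card_filter_ne_mul_add_ite (a b : F) :
    #{l : F | a ≠ l * b} + (if b ≠ 0 then 1 else 0) =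
      Fintype.card F * (if b ≠ 0 ∨ a ≠ 0 then 1 else 0) := by
  by_cases hb : b = 0
  · by_cases ha : a = 0 <;> simp [ha, hb]
  · have hsolve : ({l : F | a ≠ l * b} : Finset F) = univ.erase (a / b) := by
      ext l
      simp [eq_div_iff hb, eq_comm]
    rw [hsolve, card_erase_of_mem (mem_univ _), card_univ]
    simp [hb, Nat.sub_add_cancel Fintype.card_pos]

variable {ι : Type*} [Fintype ι]

theorem sum_hammingDist_smul_add_hammingNorm (z c : ι → F) :
    ∑ l : F, hammingDist z (l • c) + hammingNorm c =
      Fintype.card F * #{i | c i ≠ 0 ∨ z i ≠ 0} := by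
  simp only [hammingDist, hammingNorm, card_filter, Pi.smul_apply, smul_eq_mul]
  rw [sum_comm, ← sum_add_distrib, mul_sum]
  refine sum_congr rfl fun i _ => ?_
  rw [← card_filter]
  exact card_filter_ne_mul_add_ite (z i) (c i)

end HammingAveraging

/-- If `d(z,0) ≤ d(z,c)` for a codeword `c` of a linear code `C` with minimum
distance at least `dmin`, then
`|supp(c) \ supp(z)| ≥ dmin/q − d(z,c) + min_{c'∈C} d(z,c')`. -/
theorem stmt4 {F : Type*} [Field F] [Fintype F] [DecidableEq F] (n : ℕ)
    (C : Submodule F (Fin n → F)) (dmin : ℕ)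
    (hdmin : ∀ c ∈ C, c ≠ 0 → dmin ≤ hammingNorm c)
    (z : Fin n → F) (c : Fin n → F) (hc : c ∈ C) (hc0 : c ≠ 0)
    (hzc : hammingDist z 0 ≤ hammingDist z c) :
    (dmin : ℝ) / (Fintype.card F) - (hammingDist z c : ℝ) +
        ((sInf {m : ℕ | ∃ c' ∈ C, hammingDist z c' = m} : ℕ) : ℝ) ≤
      ((Finset.univ.filter fun i : Fin n => c i ≠ 0 ∧ z i = 0).card : ℝ) := by
  rw [hammingDist_zero_right] at hzc
  have hnat : dmin + Fintype.card F * sInf {m : ℕ | ∃ c' ∈ C, hammingDist z c' = m} ≤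
      Fintype.card F * (#{i | c i ≠ 0 ∧ z i = 0} + hammingDist z c) :=
    calc _ ≤ hammingNorm c + ∑ l : F, hammingDist z (l • c) :=
          add_le_add (hdmin c hc hc0) (card_mul_sInf_hammingDist_le_sum_smul C z hc)
      _ = Fintype.card F * #{i | c i ≠ 0 ∨ z i ≠ 0} := by
          rw [add_comm, sum_hammingDist_smul_add_hammingNorm]
      _ ≤ _ := Nat.mul_le_mul_left _ (card_support_union_le_of_hammingNorm_le hzc)
  have hreal : (dmin : ℝ) + Fintype.card F * sInf {m : ℕ | ∃ c' ∈ C, hammingDist z c' = m} ≤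
      Fintype.card F * (#{i | c i ≠ 0 ∧ z i = 0} + hammingDist z c) := by
    exact_mod_cast hnat
  have hq : (0 : ℝ) < Fintype.card F := by exact_mod_cast Fintype.card_pos
  have hdiv : (dmin : ℝ) / Fintype.card F ≤ #{i | c i ≠ 0 ∧ z i = 0} + hammingDist z c -
      sInf {m : ℕ | ∃ c' ∈ C, hammingDist z c' = m} := by
    rw [div_le_iff₀ hq]
    linarith
  linarith
end

section
/- (Erasure channel) Let C ⊆ Z_q^n be a (p,L)-list-decodable code with minimum distance d_min. Fix c ∈ C and let z ∈ {0,1}^n be a random erasure pattern with each coordinate independently 1 with probability p' = p − (log n)/√n. Let S(z) = {c' ∈ C : c' agrees with c on all non-erased coordinates}. Then Pr[|S(z)| > 1] ≤ e^{−2 log² n} + L · p^{d_min}. -/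
open Finset Real MeasureTheory ProbabilityTheory

/-!
If `c` is not the only codeword consistent with the unerased coordinates, some `c' ≠ c` has all
of its disagreements with `c` erased. Either more than `pn` coordinates were erased, which by
Hoeffding's inequality has probability at most `e^{-2 log² n}` because `pn` exceeds the mean
`p'n` by `√n log n`; or `d(c, c') ≤ pn`, which by list-decodability leaves at most `L` candidates
`c'`, each of whose `d(c, c') ≥ d_min` disagreements are all erased with probability
`p'^{d(c, c')} ≤ p^{d_min}`.
-/

/-- Hoeffding's lemma for a Bernoulli(`a`) variable, read off from Mathlib's sub-Gaussian bound
for random variables with values in `[0, 1]`. -/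
lemma one_sub_add_mul_exp_le {a : ℝ} (ha0 : 0 ≤ a) (ha1 : a ≤ 1) (s : ℝ) :
    1 - a + a * exp s ≤ exp (a * s + s ^ 2 / 8) := by
  have hoeffding := (hasSubgaussianMGF_of_mem_Icc (a := 0) (b := 1)
    (μ := Ber(true, false, ⟨a, ha0, ha1⟩)) (X := fun b : Bool => if b then (1 : ℝ) else 0)
    (measurable_of_finite _).aemeasurable (ae_of_all _ fun b => by cases b <;> simp)).mgf_le s
  simp only [mgf, integral_bernoulliMeasure] at hoeffding
  norm_num at hoeffding
  calc 1 - a + a * exp s = exp (a * s) * (a * exp (s * (1 - a)) + (1 - a) * exp (-(s * a))) := by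
        rw [mul_sub, mul_one, exp_sub, exp_neg]; field_simp; ring
    _ ≤ exp (a * s) * exp (s ^ 2 / 8) := by gcongr; exact hoeffding.trans_eq (by ring_nf)
    _ = exp (a * s + s ^ 2 / 8) := by rw [← exp_add]

section BernoulliWeight

variable {ι : Type*} [Fintype ι]

def bernoulliWeight (a : ℝ) (z : ι → Bool) : ℝ := ∏ i, if z i then a else 1 - a

def erasures (z : ι → Bool) : Finset ι := {i | z i}

lemma bernoulliWeight_nonneg {a : ℝ} (ha0 : 0 ≤ a) (ha1 : a ≤ 1) (z : ι → Bool) :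
    0 ≤ bernoulliWeight a z :=
  prod_nonneg fun i _ => by split <;> linarith

variable [DecidableEq ι]

lemma sum_bernoulliWeight_mul_prod_ite (a : ℝ) (x y : ι → ℝ) :
    ∑ z : ι → Bool, bernoulliWeight a z * ∏ i, (if z i then x i else y i) =
      ∏ i, ((1 - a) * y i + a * x i) := by
  have hfactor (i : ι) : (1 - a) * y i + a * x i =
      ∑ b : Bool, (if b then a else 1 - a) * if b then x i else y i := by
    simp [add_comm]
  simp only [hfactor, Fintype.prod_sum, bernoulliWeight, prod_mul_distrib]

lemma sum_bernoulliWeight_mul_ite_subset_erasures (a : ℝ) (D : Finset ι) :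
    ∑ z : ι → Bool, bernoulliWeight a z * (if D ⊆ erasures z then 1 else 0) = a ^ #D := by
  have hind (z : ι → Bool) :
      (if D ⊆ erasures z then 1 else 0 : ℝ) = ∏ i, if z i then 1 else if i ∈ D then 0 else 1 := by
    split_ifs with hDz
    · refine (prod_eq_one fun i _ => ?_).symm
      by_cases hz : z i
      · simp [hz]
      · have hiD : i ∉ D := fun hi => hz (by simpa [erasures] using hDz hi)
        simp [hz, hiD]
    · obtain ⟨i, hiD, hiz⟩ := not_subset.1 hDz
      refine (prod_eq_zero (mem_univ i) ?_).symm
      simp_all [erasures]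
  calc _ = ∏ i, ((1 - a) * (if i ∈ D then 0 else 1) + a * 1) := by
        simp_rw [hind, sum_bernoulliWeight_mul_prod_ite]
    _ = ∏ i, if i ∈ D then a else 1 := prod_congr rfl fun i _ => by split_ifs <;> ring
    _ = a ^ #D := by rw [prod_ite_mem, univ_inter, prod_const]

lemma sum_bernoulliWeight_mul_exp_card_erasures (a s : ℝ) :
    ∑ z : ι → Bool, bernoulliWeight a z * exp (s * #(erasures z)) =
      (1 - a + a * exp s) ^ Fintype.card ι := by
  have hexp (z : ι → Bool) : exp (s * #(erasures z)) = ∏ i, if z i then exp s else 1 := by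
    rw [← prod_filter, prod_const, mul_comm, exp_nat_mul, erasures]
  simp_rw [hexp, sum_bernoulliWeight_mul_prod_ite]
  simp

lemma sum_bernoulliWeight_mul_ite_lt_card_erasures_le {a t : ℝ} (ha0 : 0 ≤ a) (ha1 : a ≤ 1)
    (ht : 0 ≤ t) :
    ∑ z : ι → Bool,
        bernoulliWeight a z * (if (a + t) * Fintype.card ι < #(erasures z) then 1 else 0) ≤
      exp (-2 * t ^ 2 * Fintype.card ι) := by
  -- Chernoff's bound with the exponent `s = 4t` minimising `s ^ 2 / 8 - s t`.
  have markov (z : ι → Bool) :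
      (if (a + t) * Fintype.card ι < #(erasures z) then 1 else 0 : ℝ) ≤
        exp (-(4 * t * ((a + t) * Fintype.card ι))) * exp (4 * t * #(erasures z)) := by
    rw [← exp_add]
    split_ifs with h
    · exact one_le_exp (by nlinarith)
    · exact (exp_pos _).le
  calc _ ≤ ∑ z : ι → Bool, bernoulliWeight a z *
          (exp (-(4 * t * ((a + t) * Fintype.card ι))) * exp (4 * t * #(erasures z))) :=
        sum_le_sum fun z _ => mul_le_mul_of_nonneg_left (markov z)
          (bernoulliWeight_nonneg ha0 ha1 z)
    _ = exp (-(4 * t * ((a + t) * Fintype.card ι))) *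
          (1 - a + a * exp (4 * t)) ^ Fintype.card ι := by
        rw [← sum_bernoulliWeight_mul_exp_card_erasures, mul_sum]
        exact sum_congr rfl fun z _ => by ring
    _ ≤ exp (-(4 * t * ((a + t) * Fintype.card ι))) *
          exp (a * (4 * t) + (4 * t) ^ 2 / 8) ^ Fintype.card ι := by
        gcongr
        exact one_sub_add_mul_exp_le ha0 ha1 _
    _ = exp (-2 * t ^ 2 * Fintype.card ι) := by
        rw [← exp_nat_mul, ← exp_add]
        ring_nf

end BernoulliWeight

section Erasures

variable {ι α : Type*} [Fintype ι] [DecidableEq ι] [DecidableEq α]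

lemma ite_one_lt_card_le_of_consistent (C : Finset (ι → α)) (c : ι → α) (r : ℝ)
    (z : ι → Bool) {S : Finset (ι → α)} (hS : ∀ c' ∈ S, c' ∈ C ∧ ∀ i, z i = false → c' i = c i) :
    (if 1 < #S then 1 else 0 : ℝ) ≤
      (if r < #(erasures z) then 1 else 0) +
        ∑ c' ∈ {c' ∈ C | (hammingDist c c' : ℝ) ≤ r}.erase c,
          if ({i | c i ≠ c' i} : Finset ι) ⊆ erasures z then 1 else 0 := by
  split_ifs with hS1 hr
  · exact le_add_of_nonneg_right (sum_nonneg fun _ _ => by positivity)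
  · obtain ⟨c', hc'S, hne⟩ := exists_mem_ne hS1 c
    obtain ⟨hc'C, hagree⟩ := hS c' hc'S
    have hcover : ({i | c i ≠ c' i} : Finset ι) ⊆ erasures z := by
      intro i hi
      simp only [erasures, mem_filter, mem_univ, true_and]
      by_contra hzi
      exact (mem_filter.1 hi).2 (hagree i (by simpa using hzi)).symm
    have hdist : (hammingDist c c' : ℝ) ≤ r :=
      (Nat.cast_le.2 (card_le_card hcover)).trans (not_lt.1 hr)
    have hc' : c' ∈ {c' ∈ C | (hammingDist c c' : ℝ) ≤ r}.erase c :=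
      mem_erase.2 ⟨hne, mem_filter.2 ⟨hc'C, hdist⟩⟩
    rw [zero_add]
    exact (if_pos hcover).symm.le.trans (single_le_sum
      (f := fun c' => if ({i | c i ≠ c' i} : Finset ι) ⊆ erasures z then (1 : ℝ) else 0)
      (fun _ _ => by positivity) hc')
  all_goals positivity

lemma sum_mul_ite_one_lt_card_le_of_consistent (C : Finset (ι → α)) (c : ι → α) (r : ℝ)
    {w : (ι → Bool) → ℝ} (hw : ∀ z, 0 ≤ w z) {S : (ι → Bool) → Finset (ι → α)}
    (hS : ∀ z, ∀ c' ∈ S z, c' ∈ C ∧ ∀ i, z i = false → c' i = c i) :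
    ∑ z : ι → Bool, w z * (if 1 < #(S z) then 1 else 0) ≤
      ∑ z : ι → Bool, w z * (if r < #(erasures z) then 1 else 0) +
        ∑ c' ∈ {c' ∈ C | (hammingDist c c' : ℝ) ≤ r}.erase c,
          ∑ z : ι → Bool, w z * if ({i | c i ≠ c' i} : Finset ι) ⊆ erasures z then 1 else 0 := by
  calc _ ≤ ∑ z : ι → Bool, w z * ((if r < #(erasures z) then 1 else 0) +
          ∑ c' ∈ {c' ∈ C | (hammingDist c c' : ℝ) ≤ r}.erase c,
            if ({i | c i ≠ c' i} : Finset ι) ⊆ erasures z then 1 else 0) := by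
        gcongr with z
        · exact hw z
        · exact ite_one_lt_card_le_of_consistent C c r z (hS z)
    _ = _ := by
        simp_rw [mul_add, sum_add_distrib, mul_sum]
        rw [sum_comm]

end Erasures

lemma sq_log_div_sqrt_mul_self {x : ℝ} (hx : 0 ≤ x) : (log x / √x) ^ 2 * x = log x ^ 2 := by
  rcases hx.eq_or_lt with rfl | hx
  · simp
  · rw [div_pow, sq_sqrt hx.le, div_mul_cancel₀ _ hx.ne']

/-- Erasure channel: for a `(p,L)`-list-decodable code `C ⊆ Z_q^n` with minimum
distance `d_min` and a codeword `c`, under i.i.d. `Bernoulli(p − log n/√n)`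
erasures the probability that some other codeword agrees with `c` on all
non-erased coordinates is at most `e^{−2 log² n} + L·p^{d_min}`. -/
theorem stmt13 (q n L dmin : ℕ) (p : ℝ) (C : Finset (Fin n → Fin q))
    (c : Fin n → Fin q) (hc : c ∈ C)
    (hdist : ∀ c₁ ∈ C, ∀ c₂ ∈ C, c₁ ≠ c₂ → dmin ≤ hammingDist c₁ c₂)
    (hLD : ∀ w : Fin n → Fin q,
      (C.filter fun c' => (hammingDist w c' : ℝ) ≤ p * n).card ≤ L)
    (hp0 : 0 ≤ p - Real.log n / Real.sqrt n) (hp1 : p ≤ 1) :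
    (∑ z : Fin n → Bool,
        (∏ i, if z i then p - Real.log n / Real.sqrt n
              else 1 - (p - Real.log n / Real.sqrt n)) *
          (if 1 < (C.filter fun c' => ∀ i, z i = false → c' i = c i).card then (1:ℝ) else 0)) ≤
      Real.exp (-2 * Real.log n ^ 2) + (L : ℝ) * p ^ dmin := by
  set t := log n / √n
  set a := p - t
  have ht : 0 ≤ t := div_nonneg (log_natCast_nonneg n) (sqrt_nonneg _)
  have hap : a ≤ p := sub_le_self p ht
  have ha1 : a ≤ 1 := hap.trans hp1
  set C' := {c' ∈ C | (hammingDist c c' : ℝ) ≤ p * n}.erase c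
  have htail : ∑ z : Fin n → Bool, bernoulliWeight a z * (if p * n < #(erasures z) then 1 else 0)
      ≤ exp (-2 * log n ^ 2) := by
    have hpn : (a + t) * n = p * n := by simp [a]
    have h := sum_bernoulliWeight_mul_ite_lt_card_erasures_le (ι := Fin n) hp0 ha1 ht
    rwa [Fintype.card_fin, hpn, mul_assoc, sq_log_div_sqrt_mul_self n.cast_nonneg] at h
  have hcodeword : ∀ c' ∈ C', ∑ z : Fin n → Bool, bernoulliWeight a z *
      (if ({i | c i ≠ c' i} : Finset (Fin n)) ⊆ erasures z then 1 else 0) ≤ p ^ dmin := by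
    intro c' hc'
    obtain ⟨hne, hc'C⟩ := mem_erase.1 hc'
    rw [sum_bernoulliWeight_mul_ite_subset_erasures]
    calc a ^ hammingDist c c' ≤ a ^ dmin :=
          pow_le_pow_of_le_one hp0 ha1 (hdist c hc c' (mem_filter.1 hc'C).1 hne.symm)
      _ ≤ p ^ dmin := pow_le_pow_left₀ hp0 hap dmin
  have hcard : (#C' : ℝ) ≤ L := by exact_mod_cast (card_erase_le.trans (hLD c) : #C' ≤ L)
  refine (sum_mul_ite_one_lt_card_le_of_consistent C c (p * n) (bernoulliWeight_nonneg hp0 ha1)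
    fun z c' h => mem_filter.1 h).trans ?_
  grw [htail, sum_le_sum hcodeword, sum_const, nsmul_eq_mul, hcard]
  exact pow_nonneg (hp0.trans hap) dmin
end

section
/- For nonnegative random variables H and F with F taking values in {0,1}, the following 'square-root gain' bound holds: E[√(H+F)] ≥ E[√H] + E[F]² / (E[F] + 2E[√H]), provided E[F] + 2E[√H] > 0. -/
open Finset

/-!
Write `A = E[√(H+F)]`, `B = E[√H]`, `C = E[√F]`. Since `(√(H+F) - √H)(√(H+F) + √H) = F`,
Cauchy–Schwarz gives `C² ≤ (A - B)(A + B)`, and subadditivity of `√` gives `A ≤ B + C`,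
so `C² ≤ (A - B)(C + 2B)`. For `{0,1}`-valued `F` we have `√F = F`.
-/

namespace Real

lemma sqrt_add_le_sqrt_add_sqrt {x y : ℝ} (hx : 0 ≤ x) (hy : 0 ≤ y) : √(x + y) ≤ √x + √y := by
  rw [sqrt_le_iff]
  refine ⟨by positivity, ?_⟩
  nlinarith [sq_sqrt hx, sq_sqrt hy, sqrt_nonneg x, sqrt_nonneg y]

lemma sqrt_add_sub_sqrt_mul_sqrt_add_add_sqrt {x y : ℝ} (hx : 0 ≤ x) (hy : 0 ≤ y) :
    (√(x + y) - √x) * (√(x + y) + √x) = y := by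
  linear_combination sq_sqrt (add_nonneg hx hy) - sq_sqrt hx

end Real

section SqrtGain

variable {ι : Type*} (s : Finset ι) {w h f : ι → ℝ}

theorem sq_sum_mul_sqrt_le_sum_mul_sub_mul_sum_mul_add (hw : ∀ i ∈ s, 0 ≤ w i)
    (hh : ∀ i ∈ s, 0 ≤ h i) (hf : ∀ i ∈ s, 0 ≤ f i) :
    (∑ i ∈ s, w i * √(f i)) ^ 2 ≤
      (∑ i ∈ s, w i * (√(h i + f i) - √(h i))) * ∑ i ∈ s, w i * (√(h i + f i) + √(h i)) := by
  refine sum_sq_le_sum_mul_sum_of_sq_le_mul s (fun i hi => ?_) (fun i hi => ?_) (fun i hi => ?_)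
  · have := Real.sqrt_le_sqrt (le_add_of_nonneg_right (hf i hi) : h i ≤ h i + f i)
    exact mul_nonneg (hw i hi) (sub_nonneg.2 this)
  · exact mul_nonneg (hw i hi) (by positivity)
  · rw [mul_pow, Real.sq_sqrt (hf i hi), mul_mul_mul_comm,
      Real.sqrt_add_sub_sqrt_mul_sqrt_add_add_sqrt (hh i hi) (hf i hi), sq]

theorem sum_mul_sqrt_add_sq_div_le_sum_mul_sqrt_add (hw : ∀ i ∈ s, 0 ≤ w i)
    (hh : ∀ i ∈ s, 0 ≤ h i) (hf : ∀ i ∈ s, 0 ≤ f i)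
    (hpos : 0 < (∑ i ∈ s, w i * √(f i)) + 2 * ∑ i ∈ s, w i * √(h i)) :
    (∑ i ∈ s, w i * √(h i)) +
        (∑ i ∈ s, w i * √(f i)) ^ 2 /
          ((∑ i ∈ s, w i * √(f i)) + 2 * ∑ i ∈ s, w i * √(h i)) ≤
      ∑ i ∈ s, w i * √(h i + f i) := by
  set A := ∑ i ∈ s, w i * √(h i + f i)
  set B := ∑ i ∈ s, w i * √(h i)
  set C := ∑ i ∈ s, w i * √(f i)
  have hBA : B ≤ A := sum_le_sum fun i hi =>
    mul_le_mul_of_nonneg_left (Real.sqrt_le_sqrt (by linarith [hf i hi])) (hw i hi)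
  have hAC : A ≤ B + C := by
    rw [← sum_add_distrib]
    refine sum_le_sum fun i hi => ?_
    rw [← mul_add]
    exact mul_le_mul_of_nonneg_left
      (Real.sqrt_add_le_sqrt_add_sqrt (hh i hi) (hf i hi)) (hw i hi)
  have hCS : C ^ 2 ≤ (A - B) * (A + B) := by
    have := sq_sum_mul_sqrt_le_sum_mul_sub_mul_sum_mul_add s hw hh hf
    simpa only [mul_sub, mul_add, sum_sub_distrib, sum_add_distrib] using this
  have : C ^ 2 / (C + 2 * B) ≤ A - B := by
    rw [div_le_iff₀ hpos]
    nlinarith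
  linarith

end SqrtGain

theorem stmt17_general {α : Type*} [Fintype α] (w H F : α → ℝ)
    (hw : ∀ a, 0 ≤ w a)
    (hH : ∀ a, 0 ≤ H a) (hF : ∀ a, F a = 0 ∨ F a = 1)
    (hpos : 0 < (∑ a, w a * F a) + 2 * ∑ a, w a * Real.sqrt (H a)) :
    (∑ a, w a * Real.sqrt (H a)) +
        (∑ a, w a * F a) ^ 2 / ((∑ a, w a * F a) + 2 * ∑ a, w a * Real.sqrt (H a)) ≤
      ∑ a, w a * Real.sqrt (H a + F a) := by
  have hsqrtF : ∀ a, √(F a) = F a := fun a => by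
    rcases hF a with h | h <;> simp [h]
  have hFnn : ∀ a ∈ univ, 0 ≤ F a := fun a _ => hsqrtF a ▸ Real.sqrt_nonneg _
  simpa only [hsqrtF] using sum_mul_sqrt_add_sq_div_le_sum_mul_sqrt_add univ
    (fun a _ => hw a) (fun a _ => hH a) hFnn (by simpa only [hsqrtF] using hpos)

/-- Square-root gain bound: for nonnegative `H` and `{0,1}`-valued `F` on a
finite probability space, `E[√(H+F)] ≥ E[√H] + E[F]²/(E[F] + 2E[√H])`. -/
theorem stmt17 {α : Type*} [Fintype α] (w H F : α → ℝ)
    (hw : ∀ a, 0 ≤ w a) (hw1 : ∑ a, w a = 1)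
    (hH : ∀ a, 0 ≤ H a) (hF : ∀ a, F a = 0 ∨ F a = 1)
    (hpos : 0 < (∑ a, w a * F a) + 2 * ∑ a, w a * Real.sqrt (H a)) :
    (∑ a, w a * Real.sqrt (H a)) +
        (∑ a, w a * F a) ^ 2 / ((∑ a, w a * F a) + 2 * ∑ a, w a * Real.sqrt (H a)) ≤
      ∑ a, w a * Real.sqrt (H a + F a) :=
  stmt17_general w H F hw hH hF hpos
end
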